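/- Let G be a triangle-free finite simple graph with a transitive vertex ordering < and let e, e' be edges of G with l(e) < l(e'). If r(e) < l(e'), then {e, e'} is a uniquely restricted matching in G. -/
import Mathlib


/-- The set of vertices matched by a set of edges `M`. -/
def matchedVerts {V : Type*} (M : Set (Sym2 V)) : Set V := {v | ∃ e ∈ M, v ∈ e}

/-- `M` is a matching in the simple graph `G`: a set of edges of `G` no two of which
share an endpoint. -/
def IsMatchingSet {V : Type*} (G : SimpleGraph V) (M : Set (Sym2 V)) : Prop :=
  M ⊆ G.edgeSet ∧ ∀ e ∈ M, ∀ f ∈ M, e ≠ f → ∀ v : V, v ∈ e → v ∉ f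

/-- `M` is a uniquely restricted matching in `G`: a matching such that no other matching
of `G` matches exactly the same set of vertices. -/
def UniquelyRestricted {V : Type*} (G : SimpleGraph V) (M : Set (Sym2 V)) : Prop :=
  IsMatchingSet G M ∧
    ∀ M' : Set (Sym2 V), IsMatchingSet G M' → matchedVerts M' = matchedVerts M → M' = M

/-- The smaller endpoint `l(e)` of an edge `e`. -/
def eL {V : Type*} [LinearOrder V] (e : Sym2 V) : V :=
  Sym2.lift ⟨fun a b => min a b, fun a b => min_comm a b⟩ e

/-- The larger endpoint `r(e)` of an edge `e`. -/
def eR {V : Type*} [LinearOrder V] (e : Sym2 V) : V :=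
  Sym2.lift ⟨fun a b => max a b, fun a b => max_comm a b⟩ e

/-- The linear order on `V` is a proper vertex ordering of `G`:
for `u < v < w`, `uw ∈ E(G)` implies `uv ∈ E(G)` and `vw ∈ E(G)`. -/
def IsProperOrdering {V : Type*} [LinearOrder V] (G : SimpleGraph V) : Prop :=
  ∀ u v w : V, u < v → v < w → G.Adj u w → G.Adj u v ∧ G.Adj v w

/-- The linear order on `V` is a transitive vertex ordering of `G`. -/
def IsTransitiveOrdering {V : Type*} [LinearOrder V] (G : SimpleGraph V) : Prop :=
  ∀ u v w : V, u < v → v < w →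
    ((G.Adj u v → G.Adj v w → G.Adj u w) ∧ (G.Adj u w → G.Adj u v ∨ G.Adj v w))

/-- There is an alternating cycle of length 4 with respect to `M` in `G`. -/
def HasAltC4 {V : Type*} (G : SimpleGraph V) (M : Set (Sym2 V)) : Prop :=
  ∃ u v u' v' : V, u ≠ v ∧ u ≠ u' ∧ u ≠ v' ∧ v ≠ u' ∧ v ≠ v' ∧ u' ≠ v' ∧
    s(u, v) ∈ M ∧ s(u', v') ∈ M ∧ G.Adj u u' ∧ G.Adj v v'

/-- `G` admits an interval representation by nonempty closed real intervals. -/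
def HasIntervalRep {V : Type*} (G : SimpleGraph V) : Prop :=
  ∃ a b : V → ℝ, (∀ v, a v ≤ b v) ∧
    ∀ u v : V, u ≠ v →
      (G.Adj u v ↔ (Set.Icc (a u) (b u) ∩ Set.Icc (a v) (b v)).Nonempty)

/-- The matching `M` starts with the edge `e`. -/
def StartsWith {V : Type*} [LinearOrder V] (M : Set (Sym2 V)) (e : Sym2 V) : Prop :=
  e ∈ M ∧ ∀ f ∈ M, f ≠ e → eL e < eL f

lemma sym2_eq_pair {V : Type*} [LinearOrder V] (e : Sym2 V) : e = s(eL e, eR e) := by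
  induction e using Sym2.ind with
  | _ u v =>
    simp only [eL, eR, Sym2.lift_mk]
    rcases le_total u v with h | h
    · rw [min_eq_left h, max_eq_right h]
    · rw [min_eq_right h, max_eq_left h]; exact Sym2.eq_swap

lemma eL_le_eR {V : Type*} [LinearOrder V] (e : Sym2 V) : eL e ≤ eR e := by
  induction e using Sym2.ind with
  | _ u v => simpa only [eL, eR, Sym2.lift_mk] using min_le_max

lemma eL_mem {V : Type*} [LinearOrder V] (e : Sym2 V) : eL e ∈ e := by
  induction e using Sym2.ind with
  | _ u v =>
    simp only [eL, Sym2.lift_mk, Sym2.mem_iff]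
    rcases le_total u v with h | h
    · left; exact min_eq_left h
    · right; exact min_eq_right h

theorem stmt11 {V : Type*} [Fintype V] [LinearOrder V] (G : SimpleGraph V)
    (htf : G.CliqueFree 3) (hord : IsTransitiveOrdering G) (e e' : Sym2 V)
    (he : e ∈ G.edgeSet) (he' : e' ∈ G.edgeSet)
    (hll : eL e < eL e') (hrl : eR e < eL e') :
    UniquelyRestricted G {e, e'} := by
  set a := eL e with ha
  set b := eR e with hb
  set c := eL e' with hc
  set d := eR e' with hd
  have hee : e = s(a, b) := sym2_eq_pair e
  have hee' : e' = s(c, d) := sym2_eq_pair e'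
  have hab : G.Adj a b := by rwa [hee, SimpleGraph.mem_edgeSet] at he
  have hcd : G.Adj c d := by rwa [hee', SimpleGraph.mem_edgeSet] at he'
  have halb : a < b := lt_of_le_of_ne (eL_le_eR e) hab.ne
  have hcld : c < d := lt_of_le_of_ne (eL_le_eR e') hcd.ne
  have hblc : b < c := hrl
  have halc : a < c := hll
  have hald : a < d := halc.trans hcld
  have hbld : b < d := hblc.trans hcld
  have memIff : ∀ v : V, v ∈ matchedVerts ({e, e'} : Set (Sym2 V)) ↔
      (v = a ∨ v = b ∨ v = c ∨ v = d) := by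
    intro v
    simp only [matchedVerts, Set.mem_setOf_eq, Set.mem_insert_iff, Set.mem_singleton_iff,
      hee, hee']
    constructor
    · rintro ⟨f, (rfl | rfl), hv⟩ <;> rw [Sym2.mem_iff] at hv <;> tauto
    · rintro (rfl | rfl | rfl | rfl)
      · exact ⟨s(a, b), Or.inl rfl, Sym2.mem_mk_left _ _⟩
      · exact ⟨s(a, b), Or.inl rfl, Sym2.mem_mk_right _ _⟩
      · exact ⟨s(c, d), Or.inr rfl, Sym2.mem_mk_left _ _⟩
      · exact ⟨s(c, d), Or.inr rfl, Sym2.mem_mk_right _ _⟩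
  constructor
  · constructor
    · rintro f (rfl | rfl); exacts [he, he']
    · rintro f (rfl | rfl) g (rfl | rfl) hfg v hvf hvg
      · exact hfg rfl
      · rw [hee, Sym2.mem_iff] at hvf
        rw [hee', Sym2.mem_iff] at hvg
        rcases hvf with rfl | rfl
        · rcases hvg with h | h
          · exact halc.ne h
          · exact hald.ne h
        · rcases hvg with h | h
          · exact hblc.ne h
          · exact hbld.ne h
      · rw [hee', Sym2.mem_iff] at hvf
        rw [hee, Sym2.mem_iff] at hvg
        rcases hvf with rfl | rfl
        · rcases hvg with h | h
          · exact halc.ne' h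
          · exact hblc.ne' h
        · rcases hvg with h | h
          · exact hald.ne' h
          · exact hbld.ne' h
      · exact hfg rfl
  · intro M' hM' hmv
    have hsame : ∀ f ∈ M', ∀ g ∈ M', ∀ v : V, v ∈ f → v ∈ g → f = g := by
      intro f hf g hg v hvf hvg
      by_contra h
      exact hM'.2 f hf g hg h v hvf hvg
    have getEdge : ∀ v : V, (v = a ∨ v = b ∨ v = c ∨ v = d) →
        ∃ x : V, s(v, x) ∈ M' ∧ G.Adj v x ∧ (x = a ∨ x = b ∨ x = c ∨ x = d) := by
      intro v hv
      have hvM : v ∈ matchedVerts M' := by rw [hmv]; exact (memIff v).mpr hv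
      obtain ⟨f, hfM, hvf⟩ := hvM
      refine ⟨Sym2.Mem.other hvf, ?_, ?_, ?_⟩
      · rw [Sym2.other_spec hvf]; exact hfM
      · have h1 : f ∈ G.edgeSet := hM'.1 hfM
        rw [← Sym2.other_spec hvf, SimpleGraph.mem_edgeSet] at h1
        exact h1
      · have hx : Sym2.Mem.other hvf ∈ matchedVerts M' :=
          ⟨f, hfM, Sym2.other_mem hvf⟩
        rw [hmv] at hx
        exact (memIff _).mp hx
    obtain ⟨x, hxM, hax, hx4⟩ := getEdge a (Or.inl rfl)
    have hxa : x ≠ a := hax.ne'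
    rcases hx4 with rfl | rfl | rfl | rfl
    · exact absurd rfl hxa
    · -- x = b : s(a,b) ∈ M'
      obtain ⟨y, hyM, hcy, hy4⟩ := getEdge c (Or.inr (Or.inr (Or.inl rfl)))
      have hya : y ≠ a := by
        rintro rfl
        have h2 := hsame _ hyM _ hxM a (Sym2.mem_mk_right _ _) (Sym2.mem_mk_left _ _)
        rw [Sym2.eq_iff] at h2
        rcases h2 with ⟨h1, _⟩ | ⟨h1, _⟩
        · exact halc.ne' h1
        · exact hblc.ne' h1
      have hyb : y ≠ b := by
        rintro rfl
        have h2 := hsame _ hyM _ hxM b (Sym2.mem_mk_right _ _) (Sym2.mem_mk_right _ _)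
        rw [Sym2.eq_iff] at h2
        rcases h2 with ⟨h1, _⟩ | ⟨h1, _⟩
        · exact halc.ne' h1
        · exact hblc.ne' h1
      have hyd : y = d := by
        rcases hy4 with rfl | rfl | rfl | rfl
        · exact absurd rfl hya
        · exact absurd rfl hyb
        · exact absurd rfl hcy.ne'
        · rfl
      subst hyd
      ext f
      simp only [Set.mem_insert_iff, Set.mem_singleton_iff]
      constructor
      · intro hfM
        have h1 : eL f ∈ matchedVerts M' := ⟨f, hfM, eL_mem f⟩
        rw [hmv] at h1
        rcases (memIff _).mp h1 with h | h | h | h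
        · left; rw [hee]
          exact hsame _ hfM _ hxM a (h ▸ eL_mem f) (Sym2.mem_mk_left _ _)
        · left; rw [hee]
          exact hsame _ hfM _ hxM b (h ▸ eL_mem f) (Sym2.mem_mk_right _ _)
        · right; rw [hee']
          exact hsame _ hfM _ hyM c (h ▸ eL_mem f) (Sym2.mem_mk_left _ _)
        · right; rw [hee']
          exact hsame _ hfM _ hyM d (h ▸ eL_mem f) (Sym2.mem_mk_right _ _)
      · rintro (rfl | rfl)
        · rwa [hee]
        · rwa [hee']
    · -- x = c : Adj a c
      obtain ⟨y, hyM, hby, hy4⟩ := getEdge b (Or.inr (Or.inl rfl))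
      have hya : y ≠ a := by
        rintro rfl
        have h2 := hsame _ hyM _ hxM a (Sym2.mem_mk_right _ _) (Sym2.mem_mk_left _ _)
        rw [Sym2.eq_iff] at h2
        rcases h2 with ⟨h1, _⟩ | ⟨h1, _⟩
        · exact halb.ne' h1
        · exact hblc.ne h1
      have hyc : y ≠ c := by
        rintro rfl
        have h2 := hsame _ hyM _ hxM c (Sym2.mem_mk_right _ _) (Sym2.mem_mk_right _ _)
        rw [Sym2.eq_iff] at h2
        rcases h2 with ⟨h1, _⟩ | ⟨h1, _⟩
        · exact halb.ne' h1
        · exact hblc.ne h1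
      have hyd : y = d := by
        rcases hy4 with rfl | rfl | rfl | rfl
        · exact absurd rfl hya
        · exact absurd rfl hby.ne'
        · exact absurd rfl hyc
        · rfl
      subst hyd
      have had : G.Adj a d := (hord a c d halc hcld).1 hax hcd
      exact absurd (SimpleGraph.is3Clique_triple_iff.mpr ⟨hab, had, hby⟩) (htf {a, b, d})
    · -- x = d : Adj a d
      obtain ⟨y, hyM, hby, hy4⟩ := getEdge b (Or.inr (Or.inl rfl))
      have hya : y ≠ a := by
        rintro rfl
        have h2 := hsame _ hyM _ hxM a (Sym2.mem_mk_right _ _) (Sym2.mem_mk_left _ _)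
        rw [Sym2.eq_iff] at h2
        rcases h2 with ⟨h1, _⟩ | ⟨h1, _⟩
        · exact halb.ne' h1
        · exact hbld.ne h1
      have hyd : y ≠ d := by
        rintro rfl
        have h2 := hsame _ hyM _ hxM d (Sym2.mem_mk_right _ _) (Sym2.mem_mk_right _ _)
        rw [Sym2.eq_iff] at h2
        rcases h2 with ⟨h1, _⟩ | ⟨h1, _⟩
        · exact halb.ne' h1
        · exact hbld.ne h1
      have hyc : y = c := by
        rcases hy4 with rfl | rfl | rfl | rfl
        · exact absurd rfl hya
        · exact absurd rfl hby.ne'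
        · rfl
        · exact absurd rfl hyd
      subst hyc
      have hbd : G.Adj b d := (hord b c d hblc hcld).1 hby hcd
      exact absurd (SimpleGraph.is3Clique_triple_iff.mpr ⟨hby, hbd, hcd⟩) (htf {b, c, d})
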